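/- arXiv:2305.08125 — 2 statements merged into one kernel-verified Lean document; each statement's English description precedes it below -/
import Mathlib

section
/- Let u_1, …, u_n be positive integers and t, k positive integers such that u_i < t for every i, k < n, and every subset S ⊆ {1,…,n} with |S| < k satisfies Σ_{i∈S} u_i < t. Let E be the PB instance with projects C = {p, c_1,…,c_n, d_1,…,d_{k+1}}, costs cost(p) = t, cost(c_i) = u_i, cost(d_j) = t + 1, a single voter v who approves exactly the projects in C ∖ {p}, budget B = u_1 + … + u_n, and GreedyCost run with a tie-breaking order ≻ whose most-preferred element is p. If F is a set of at most k approval flips with p ∈ GreedyCost(E_F), then |F| = k and every flip in F removes the voter's approval of a project among c_1,…,c_n; that is, F = {(v, c_i) : i ∈ S} for some S ⊆ {1,…,n} with |S| = k (in particular, p is not approved in E_F). -/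
structure PB (C V : Type) [Fintype C] [DecidableEq C] [Fintype V] [DecidableEq V] where
  A : V → Finset C
  budget : ℕ
  cost : C → ℕ

namespace PB

variable {C V : Type} [Fintype C] [DecidableEq C] [Fintype V] [DecidableEq V]

/-- The approval score of a project: the number of voters approving it. -/
def score (E : PB C V) (c : C) : ℕ :=
  (Finset.univ.filter fun v => c ∈ E.A v).card

/-- Perform the approval flips in `F`: voter `v`'s approval set becomes
`A v ∆ {c : (v, c) ∈ F}`. -/
def flip (E : PB C V) (F : Finset (V × C)) : PB C V :=
  { E with A := fun v => symmDiff (E.A v) ((F.filter fun q => q.1 = v).image Prod.snd) }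

/-- Greedily process the given list of projects: starting from `W = ∅`,
add the currently considered project whenever it fits in the budget. -/
def greedyFold (budget : ℕ) (cost : C → ℕ) (order : List C) : Finset C :=
  order.foldl (fun W c => if (∑ x ∈ W, cost x) + cost c ≤ budget then insert c W else W) ∅

/-- The order in which GreedyAV considers the projects: non-increasing approval
score, ties broken in favor of `prec`-earlier projects. -/
noncomputable def consOrderAV (E : PB C V) (prec : C → C → Bool) : List C :=
  (Finset.univ : Finset C).toList.mergeSort fun c c' =>
    decide (E.score c' < E.score c) ||
      (decide (E.score c = E.score c') && (prec c c' || decide (c = c')))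

/-- GreedyAV with tie-breaking given by the strict relation `prec`. -/
noncomputable def greedyAV (E : PB C V) (prec : C → C → Bool) : Finset C :=
  greedyFold E.budget E.cost (consOrderAV E prec)

/-- The order in which GreedyCost considers the projects: non-increasing
approval-score-to-cost ratio (compared by cross-multiplication), ties broken in
favor of `prec`-earlier projects. -/
noncomputable def consOrderCost (E : PB C V) (prec : C → C → Bool) : List C :=
  (Finset.univ : Finset C).toList.mergeSort fun c c' =>
    decide (E.score c' * E.cost c < E.score c * E.cost c') ||
      (decide (E.score c * E.cost c' = E.score c' * E.cost c) && (prec c c' || decide (c = c')))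

/-- GreedyCost with tie-breaking given by the strict relation `prec`. -/
noncomputable def greedyCost (E : PB C V) (prec : C → C → Bool) : Finset C :=
  greedyFold E.budget E.cost (consOrderCost E prec)

/-- Cheaper-first tie-breaking: ties in approval score are broken in favor of
the cheaper project, with remaining ties broken by the residual order `prec0`. -/
def cheaperFirst (cost : C → ℕ) (prec0 : C → C → Bool) : C → C → Bool :=
  fun c c' => decide (cost c < cost c') || (decide (cost c = cost c') && prec0 c c')

end PB

/-! The reduction from Sized Subset Sum to GreedyCost-Flip-Bribery
(Theorem `greedycost-pb-npc`). -/

/-- The projects: `p`, `c_1, …, c_n`, and the dummy projects `d_1, …, d_{k+1}`. -/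
abbrev Proj8 (n k : ℕ) := Unit ⊕ (Fin n ⊕ Fin (k + 1))

/-- The preferred project `p`. -/
def pProj8 (n k : ℕ) : Proj8 n k := Sum.inl ()

/-- Costs: `cost(p) = t`, `cost(c_i) = u_i`, `cost(d_j) = t + 1`. -/
def cost8 {n : ℕ} (u : Fin n → ℕ) (t k : ℕ) : Proj8 n k → ℕ
  | .inl _ => t
  | .inr (.inl i) => u i
  | .inr (.inr _) => t + 1

/-- The PB instance: a single voter approving everything except `p`, and
budget `B = u_1 + … + u_n`. -/
def E8 {n : ℕ} (u : Fin n → ℕ) (t k : ℕ) : PB (Proj8 n k) Unit where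
  A := fun _ => Finset.univ.erase (Sum.inl ())
  budget := ∑ j, u j
  cost := cost8 u t k

/-!
Call `c_i` approved if its approval was not flipped. An approved `c_i` has ratio `1 / u_i`,
and every project of at least that ratio is itself an approved `c_j`: `p` has ratio at most
`1 / t`, each `d_j` has ratio at most `1 / (t + 1)`, and a flipped `c_j` has ratio `0`.
So GreedyCost considers the approved projects before all others, and since their total cost is
at most `B` it selects all of them. Hence `p` is selected only if `t` plus their cost is at most
`B = u_1 + … + u_n`, i.e. the flipped `c_i` cost at least `t` in total. By the hypothesis on
small sets there are at least `k` of them, and as at most `k` flips were made, `F` consists of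
exactly these `k` flips.
-/

namespace PB

section Greedy

variable {C : Type} [DecidableEq C] (B : ℕ) (cost : C → ℕ)

def greedyStep (W : Finset C) (c : C) : Finset C :=
  if ∑ x ∈ W, cost x + cost c ≤ B then insert c W else W

theorem greedyFold_eq_foldl (L : List C) :
    greedyFold B cost L = L.foldl (greedyStep B cost) ∅ := rfl

theorem subset_foldl_greedyStep (L : List C) (W : Finset C) :
    W ⊆ L.foldl (greedyStep B cost) W := by
  induction L generalizing W with
  | nil => exact subset_rfl
  | cons c L ih =>
    refine subset_trans ?_ (ih _)
    unfold greedyStep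
    split_ifs
    · exact Finset.subset_insert c W
    · exact subset_rfl

theorem foldl_greedyStep_subset (L : List C) (W : Finset C) :
    L.foldl (greedyStep B cost) W ⊆ W ∪ L.toFinset := by
  induction L generalizing W with
  | nil => simp
  | cons c L ih =>
    refine (ih _).trans ?_
    have : greedyStep B cost W c ⊆ insert c W := by
      unfold greedyStep
      split_ifs
      · exact subset_rfl
      · exact Finset.subset_insert c W
    intro x hx
    simp only [Finset.mem_union, List.mem_toFinset, List.mem_cons] at hx ⊢
    rcases hx with hx | hx
    · rcases Finset.mem_insert.mp (this hx) with rfl | hx <;> tauto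
    · tauto

theorem sum_foldl_add_le_of_mem {L₁ L₂ : List C} {a : C} (h₁ : a ∉ L₁) (h₂ : a ∉ L₂)
    (ha : a ∈ (L₁ ++ a :: L₂).foldl (greedyStep B cost) ∅) :
    ∑ x ∈ L₁.foldl (greedyStep B cost) ∅, cost x + cost a ≤ B := by
  by_contra h
  rw [List.foldl_append, List.foldl_cons, greedyStep, if_neg h] at ha
  have := (foldl_greedyStep_subset B cost L₂ _).trans
    (Finset.union_subset_union_left (foldl_greedyStep_subset B cost L₁ ∅)) ha
  simp_all

theorem mem_foldl_greedyStep_of_prefix {G : Finset C} (hG : ∑ x ∈ G, cost x ≤ B) {L : List C}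
    (hL : L.Nodup) (hpre : L.Pairwise fun x y => y ∈ G → x ∈ G) {W : Finset C} (hWG : W ⊆ G)
    (hWL : ∀ x ∈ L, x ∉ W) {g : C} (hgG : g ∈ G) (hgL : g ∈ L) :
    g ∈ L.foldl (greedyStep B cost) W := by
  induction L generalizing W with
  | nil => simp at hgL
  | cons c L ih =>
    rw [List.pairwise_cons] at hpre
    have hcG : c ∈ G := by
      rcases List.mem_cons.mp hgL with rfl | hgL
      · exact hgG
      · exact hpre.1 g hgL hgG
    have hcW : c ∉ W := hWL c List.mem_cons_self
    have hfit : ∑ x ∈ W, cost x + cost c ≤ B := by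
      rw [add_comm, ← Finset.sum_insert hcW]
      exact (Finset.sum_le_sum_of_subset (Finset.insert_subset hcG hWG)).trans hG
    rw [List.foldl_cons, greedyStep, if_pos hfit]
    rcases List.mem_cons.mp hgL with rfl | hgL
    · exact subset_foldl_greedyStep B cost L _ (Finset.mem_insert_self g W)
    · refine ih hL.of_cons hpre.2 (Finset.insert_subset hcG hWG) ?_ hgL
      intro x hx hxW
      rcases Finset.mem_insert.mp hxW with rfl | hxW
      · exact (List.nodup_cons.mp hL).1 hx
      · exact hWL x (List.mem_cons_of_mem c hx) hxW

theorem sum_add_le_of_mem_greedyFold {G : Finset C} {L : List C} {a : C} (hL : L.Nodup)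
    (hGL : ∀ g ∈ G, g ∈ L) (hG : ∑ x ∈ G, cost x ≤ B)
    (hpre : L.Pairwise fun x y => y ∈ G → x ∈ G) (haG : a ∉ G)
    (ha : a ∈ greedyFold B cost L) :
    ∑ x ∈ G, cost x + cost a ≤ B := by
  rw [greedyFold_eq_foldl] at ha
  have haL : a ∈ L := by
    simpa using foldl_greedyStep_subset B cost L ∅ ha
  obtain ⟨L₁, L₂, rfl⟩ := List.append_of_mem haL
  obtain ⟨hL₁, hL₂, hdisj⟩ := List.nodup_append.mp hL
  have haL₁ : a ∉ L₁ := fun h => hdisj a h a List.mem_cons_self rfl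
  obtain ⟨hpre₁, hpre₂, -⟩ := List.pairwise_append.mp hpre
  have hGL₁ : ∀ g ∈ G, g ∈ L₁ := by
    intro g hg
    rcases List.mem_append.mp (hGL g hg) with h | h
    · exact h
    · rcases List.mem_cons.mp h with rfl | h
      · exact absurd hg haG
      · exact absurd ((List.pairwise_cons.mp hpre₂).1 g h hg) haG
  have hsub : G ⊆ L₁.foldl (greedyStep B cost) ∅ := fun g hg =>
    mem_foldl_greedyStep_of_prefix B cost hG hL₁ hpre₁ (Finset.empty_subset G) (by simp) hg
      (hGL₁ g hg)
  calc ∑ x ∈ G, cost x + cost a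
      ≤ ∑ x ∈ L₁.foldl (greedyStep B cost) ∅, cost x + cost a := by
        gcongr
    _ ≤ B := sum_foldl_add_le_of_mem B cost haL₁ (List.nodup_cons.mp hL₂).1 ha

end Greedy

section Order

variable {C V : Type} [Fintype C] [DecidableEq C] [Fintype V] [DecidableEq V]

theorem perm_consOrderCost (E : PB C V) (prec : C → C → Bool) :
    (consOrderCost E prec).Perm (Finset.univ : Finset C).toList :=
  List.mergeSort_perm _ _

theorem mem_consOrderCost (E : PB C V) (prec : C → C → Bool) (c : C) :
    c ∈ consOrderCost E prec :=
  (perm_consOrderCost E prec).mem_iff.mpr (Finset.mem_toList.mpr (Finset.mem_univ c))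

theorem nodup_consOrderCost (E : PB C V) (prec : C → C → Bool) :
    (consOrderCost E prec).Nodup :=
  (perm_consOrderCost E prec).nodup_iff.mpr (Finset.nodup_toList _)

theorem pairwise_consOrderCost (E : PB C V) (prec : C → C → Bool) (hcost : ∀ c, 0 < E.cost c)
    [IsStrictTotalOrder C fun a b => prec a b = true] :
    (consOrderCost E prec).Pairwise fun c c' =>
      E.score c' * E.cost c ≤ E.score c * E.cost c' := by
  set ratio : C → ℚ := fun c => E.score c / E.cost c
  have hlt : ∀ a b, E.score b * E.cost a < E.score a * E.cost b ↔ ratio b < ratio a := by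
    intro a b
    rw [div_lt_div_iff₀ (by exact_mod_cast hcost b) (by exact_mod_cast hcost a)]
    exact_mod_cast Iff.rfl
  have heq : ∀ a b, E.score a * E.cost b = E.score b * E.cost a ↔ ratio a = ratio b := by
    intro a b
    rw [div_eq_div_iff (by exact_mod_cast (hcost a).ne') (by exact_mod_cast (hcost b).ne')]
    exact_mod_cast Iff.rfl
  -- once cross-multiplied comparisons are read as comparisons of ratios, the comparator is the
  -- lexicographic order on (ratio, `prec`)
  set r : C → C → Bool := fun c c' =>
    decide (E.score c' * E.cost c < E.score c * E.cost c') ||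
      (decide (E.score c * E.cost c' = E.score c' * E.cost c) && (prec c c' || decide (c = c')))
  have hr : ∀ a b, r a b = true ↔
      ratio b < ratio a ∨ ratio a = ratio b ∧ (prec a b = true ∨ a = b) := by
    intro a b
    simp only [r, Bool.or_eq_true, Bool.and_eq_true, decide_eq_true_eq, hlt, heq]
  have htrans : ∀ a b c, r a b = true → r b c = true → r a c = true := by
    intro a b c hab hbc
    rw [hr] at hab hbc ⊢
    have hp : prec a b = true → prec b c = true → prec a c = true :=
      IsTrans.trans (r := fun a b => prec a b = true) a b c
    rcases hab with hab | ⟨hab, hab'⟩ <;> rcases hbc with hbc | ⟨hbc, hbc'⟩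
    · exact Or.inl (hbc.trans hab)
    · exact Or.inl (hbc ▸ hab)
    · exact Or.inl (hab ▸ hbc)
    · refine Or.inr ⟨hab.trans hbc, ?_⟩
      rcases hab' with hab' | rfl <;> rcases hbc' with hbc' | rfl <;> tauto
  have htotal : ∀ a b, (r a b || r b a) = true := by
    intro a b
    rw [Bool.or_eq_true, hr, hr]
    rcases lt_trichotomy (ratio a) (ratio b) with h | h | h
    · exact Or.inr (Or.inl h)
    · rcases trichotomous_of (fun a b => prec a b = true) a b with h' | h' | h' <;> tauto
    · exact Or.inl (Or.inl h)
  refine (List.pairwise_mergeSort htrans htotal _).imp fun {a b} hab => ?_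
  rw [← not_lt, hlt, not_lt]
  rcases (hr a b).mp hab with h | ⟨h, -⟩
  · exact h.le
  · exact h.ge

end Order

theorem score_eq_ite_of_unit {C : Type} [Fintype C] [DecidableEq C] (E : PB C Unit) (c : C) :
    E.score c = if c ∈ E.A () then 1 else 0 := by
  unfold score
  split_ifs with h <;> simp [h]

end PB

open PB

section Reduction

variable {n k t : ℕ} {u : Fin n → ℕ}

def flippedC (F : Finset (Unit × Proj8 n k)) : Finset (Fin n) :=
  Finset.univ.filter fun i => ((), Sum.inr (Sum.inl i)) ∈ F

def approvedC (F : Finset (Unit × Proj8 n k)) : Finset (Proj8 n k) :=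
  (flippedC F)ᶜ.image fun i => Sum.inr (Sum.inl i)

theorem image_flippedC_subset (F : Finset (Unit × Proj8 n k)) :
    (flippedC F).image (fun i => (((), Sum.inr (Sum.inl i)) : Unit × Proj8 n k)) ⊆ F := by
  intro q hq
  obtain ⟨i, hi, rfl⟩ := Finset.mem_image.mp hq
  exact (Finset.mem_filter.mp hi).2

theorem flip_E8_A (F : Finset (Unit × Proj8 n k)) :
    ((E8 u t k).flip F).A () = symmDiff (Finset.univ.erase (pProj8 n k)) (F.image Prod.snd) := by
  change symmDiff _ ((F.filter fun q => q.1 = ()).image Prod.snd) = _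
  rw [Finset.filter_true_of_mem fun q _ => Subsingleton.elim _ _]
  rfl

theorem score_flip_E8_le_one (F : Finset (Unit × Proj8 n k)) (c : Proj8 n k) :
    ((E8 u t k).flip F).score c ≤ 1 := by
  rw [score_eq_ite_of_unit]
  split_ifs <;> simp

theorem score_flip_E8_inr_inl (F : Finset (Unit × Proj8 n k)) (i : Fin n) :
    ((E8 u t k).flip F).score (Sum.inr (Sum.inl i)) = if i ∈ flippedC F then 0 else 1 := by
  rw [score_eq_ite_of_unit, flip_E8_A]
  simp [flippedC, pProj8, Finset.mem_symmDiff, Unique.forall_iff, ite_not]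

theorem cost_E8_pos (hu : ∀ i, 0 < u i) (ht : 0 < t) (c : Proj8 n k) : 0 < (E8 u t k).cost c := by
  rcases c with _ | i | _
  · exact ht
  · exact hu i
  · exact t.succ_pos

theorem sum_cost_approvedC (F : Finset (Unit × Proj8 n k)) :
    ∑ x ∈ approvedC F, (E8 u t k).cost x = ∑ i ∈ (flippedC F)ᶜ, u i :=
  Finset.sum_image fun _ _ _ _ h => by simpa using h

theorem mem_approvedC_of_ratio_le (hu : ∀ i, 0 < u i) (hut : ∀ i, u i < t)
    {F : Finset (Unit × Proj8 n k)} {g x : Proj8 n k} (hg : g ∈ approvedC F)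
    (h : ((E8 u t k).flip F).score g * (E8 u t k).cost x ≤
      ((E8 u t k).flip F).score x * (E8 u t k).cost g) :
    x ∈ approvedC F := by
  obtain ⟨i, hi, rfl⟩ := Finset.mem_image.mp hg
  have hcost_i : (E8 u t k).cost (Sum.inr (Sum.inl i)) = u i := rfl
  rw [score_flip_E8_inr_inl, if_neg (Finset.mem_compl.mp hi), one_mul, hcost_i] at h
  have hx := score_flip_E8_le_one (u := u) (t := t) F x
  have hxu : (E8 u t k).cost x ≤ u i :=
    h.trans (by simpa using Nat.mul_le_mul_right (u i) hx)
  rcases x with _ | j | _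
  · change t ≤ u i at hxu
    exact absurd hxu (hut i).not_ge
  · by_cases hj : j ∈ flippedC F
    · rw [score_flip_E8_inr_inl, if_pos hj, zero_mul] at h
      exact absurd h (hu j).not_ge
    · exact Finset.mem_image.mpr ⟨j, Finset.mem_compl.mpr hj, rfl⟩
  · change t + 1 ≤ u i at hxu
    exact absurd hxu (by have := hut i; omega)

theorem pairwise_approvedC_consOrderCost (hu : ∀ i, 0 < u i) (ht : 0 < t) (hut : ∀ i, u i < t)
    (prec : Proj8 n k → Proj8 n k → Bool)
    [IsStrictTotalOrder (Proj8 n k) fun a b => prec a b = true]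
    (F : Finset (Unit × Proj8 n k)) :
    (consOrderCost ((E8 u t k).flip F) prec).Pairwise
      fun x y => y ∈ approvedC F → x ∈ approvedC F :=
  (pairwise_consOrderCost ((E8 u t k).flip F) prec (cost_E8_pos hu ht)).imp fun h hy =>
    mem_approvedC_of_ratio_le hu hut hy h

end Reduction

theorem stmt9_general (n k t : ℕ) (u : Fin n → ℕ) (hu : ∀ i, 0 < u i)
    (ht : 0 < t) (hut : ∀ i, u i < t)
    (hsmall : ∀ S : Finset (Fin n), S.card < k → ∑ i ∈ S, u i < t)
    (prec : Proj8 n k → Proj8 n k → Bool)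
    (hlin : IsStrictTotalOrder (Proj8 n k) fun a b => prec a b = true)
    (F : Finset (Unit × Proj8 n k)) (hF : F.card ≤ k)
    (hwin : pProj8 n k ∈ PB.greedyCost ((E8 u t k).flip F) prec) :
    F.card = k ∧
      (∃ S : Finset (Fin n), S.card = k ∧
        F = S.image fun i => (((), Sum.inr (Sum.inl i)) : Unit × Proj8 n k)) ∧
      pProj8 n k ∉ ((E8 u t k).flip F).A () := by
  have hfit : ∑ x ∈ approvedC F, (E8 u t k).cost x + t ≤ ∑ i, u i :=
    sum_add_le_of_mem_greedyFold _ _ (nodup_consOrderCost _ prec)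
      (fun g _ => mem_consOrderCost _ prec g)
      ((sum_cost_approvedC F).trans_le (Finset.sum_le_sum_of_subset (Finset.subset_univ _)))
      (pairwise_approvedC_consOrderCost hu ht hut prec F) (by simp [approvedC, pProj8]) hwin
  rw [sum_cost_approvedC] at hfit
  have hk : k ≤ (flippedC F).card := by
    by_contra hlt
    have := hsmall (flippedC F) (by omega)
    have := Finset.sum_add_sum_compl (flippedC F) u
    omega
  have hcard : ((flippedC F).image fun i => (((), Sum.inr (Sum.inl i)) : Unit × Proj8 n k)).card =
      (flippedC F).card :=
    Finset.card_image_of_injective _ fun _ _ h => by simpa using h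
  have hF_eq := (Finset.eq_of_subset_of_card_le (image_flippedC_subset F) (by omega)).symm
  have hF_card : F.card = (flippedC F).card := (congrArg Finset.card hF_eq).trans hcard
  refine ⟨by omega, ⟨flippedC F, by omega, hF_eq⟩, ?_⟩
  rw [flip_E8_A, hF_eq]
  simp [pProj8, Finset.mem_symmDiff]

theorem stmt9 (n k t : ℕ) (u : Fin n → ℕ) (hu : ∀ i, 0 < u i)
    (ht : 0 < t) (hk : 0 < k) (hut : ∀ i, u i < t) (hkn : k < n)
    (hsmall : ∀ S : Finset (Fin n), S.card < k → ∑ i ∈ S, u i < t)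
    (prec : Proj8 n k → Proj8 n k → Bool)
    (hlin : IsStrictTotalOrder (Proj8 n k) fun a b => prec a b = true)
    (hpfirst : ∀ c : Proj8 n k, c ≠ pProj8 n k → prec (pProj8 n k) c = true)
    (F : Finset (Unit × Proj8 n k)) (hF : F.card ≤ k)
    (hwin : pProj8 n k ∈ PB.greedyCost ((E8 u t k).flip F) prec) :
    F.card = k ∧
      (∃ S : Finset (Fin n), S.card = k ∧
        F = S.image fun i => (((), Sum.inr (Sum.inl i)) : Unit × Proj8 n k)) ∧
      pProj8 n k ∉ ((E8 u t k).flip F).A () :=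
  stmt9_general n k t u hu ht hut hsmall prec hlin F hF hwin
end

section
/- Let E = (C, V, A, B, cost) be a PB instance with a single voter v (so the voter's initial MES budget is B), and fix a residual tie-breaking linear order ≻ on C. Then MES-Apr(E) = A(v) ∩ GreedyAV(E), where GreedyAV is run with cheaper-first tie-breaking whose residual order is ≻; that is, a project is selected by MES-Apr if and only if it is approved by v and selected by GreedyAV with cheaper-first tie-breaking. -/
/-! The Method of Equal Shares (MES). The tie-breaking order `≻` is modeled by
a `LinearOrder` on the projects (`c ≻ c'`, i.e. `c` is earlier, iff `c < c'`). -/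

noncomputable section
open scoped Classical

namespace PB

variable {C V : Type} [Fintype C] [LinearOrder C] [Fintype V] [DecidableEq V]

/-- The total amount the approvers of `c` pay for it at price-per-utility `q`,
given balances `bal` and utilities `u`: `Σ_{w ∈ A(c)} min(bal w, u w c · q)`. -/
def mesPay (E : PB C V) (u : V → C → ℝ) (bal : V → ℝ) (c : C) (q : ℝ) : ℝ :=
  ∑ w ∈ Finset.univ.filter (fun w => c ∈ E.A w), min (bal w) (u w c * q)

/-- The set of `q ≥ 0` for which `c` is `q`-affordable. -/
def affordQ (E : PB C V) (u : V → C → ℝ) (bal : V → ℝ) (c : C) : Set ℝ :=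
  {q : ℝ | 0 ≤ q ∧ mesPay E u bal c q = (E.cost c : ℝ)}

/-- The smallest `q` for which `c` is `q`-affordable. -/
def qmin (E : PB C V) (u : V → C → ℝ) (bal : V → ℝ) (c : C) : ℝ :=
  sInf (affordQ E u bal c)

/-- One run of MES: as long as some remaining project is `q`-affordable for
some `q`, add the project that is `q`-affordable for the smallest `q` (ties
broken by the order on `C`) and charge its approvers accordingly. -/
def mesRun (E : PB C V) (u : V → C → ℝ) :
    ℕ → Finset C → (V → ℝ) → Finset C
  | 0, _, _ => ∅
  | fuel + 1, remaining, bal =>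
    let cands := remaining.filter fun c => (affordQ E u bal c).Nonempty
    if h : cands.Nonempty then
      let key : C → ℝ ×ₗ C := fun c => toLex (qmin E u bal c, c)
      let best : C := (ofLex ((cands.image key).min' (h.image key))).2
      let q : ℝ := qmin E u bal best
      insert best
        (mesRun E u fuel (remaining.erase best) fun w =>
          if best ∈ E.A w then bal w - min (bal w) (u w best * q) else bal w)
    else ∅

/-- The Method of Equal Shares with utilities `u`: every voter starts with a
balance of `B/|V|`, and projects are bought as long as any is affordable. -/
def mes (E : PB C V) (u : V → C → ℝ) : Finset C :=
  mesRun E u (Fintype.card C) Finset.univ fun _ => (E.budget : ℝ) / (Fintype.card V : ℝ)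

/-- MES-Apr: utility `1` for approved projects and `0` otherwise. -/
def mesApr (E : PB C V) : Finset C :=
  mes E fun w c => if c ∈ E.A w then 1 else 0

/-- MES-Cost: utility `cost(c)` for approved projects and `0` otherwise. -/
def mesCost (E : PB C V) : Finset C :=
  mes E fun w c => if c ∈ E.A w then (E.cost c : ℝ) else 0

end PB

end

/-! With a single voter `v` and approval utilities, `c` is `q`-affordable exactly when `c ∈ A(v)`,
`cost c ≤ b(v)` and `q ≥ cost c`, so the least such `q` is `cost c`. Hence MES-Apr buys the approved
projects in the order of increasing `(cost, ≻)`, each time paying its full cost, and stops at the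
first one it cannot afford; since costs only increase along this order, that is the same as
scanning the whole sorted list and taking every project that still fits in the remaining budget.
Under cheaper-first tie-breaking, GreedyAV considers the approved projects (score `1`) first and in
exactly this order, and the unapproved ones (score `0`) afterwards, so on `A(v)` it performs the
same scan. -/

namespace PB

section BudgetGreedy

variable {C : Type} [DecidableEq C]

noncomputable def budgetGreedy (cost : C → ℝ) : ℝ → List C → Finset C
  | _, [] => ∅
  | b, c :: l =>
    if cost c ≤ b then insert c (budgetGreedy cost (b - cost c) l) else budgetGreedy cost b l

variable (cost : C → ℝ)

@[simp]
theorem budgetGreedy_nil (b : ℝ) : budgetGreedy cost b [] = ∅ := rfl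

theorem budgetGreedy_cons (b : ℝ) (c : C) (l : List C) :
    budgetGreedy cost b (c :: l) =
      if cost c ≤ b then insert c (budgetGreedy cost (b - cost c) l)
      else budgetGreedy cost b l := rfl

theorem mem_of_mem_budgetGreedy {b : ℝ} {l : List C} {c : C}
    (h : c ∈ budgetGreedy cost b l) : c ∈ l := by
  induction l generalizing b with
  | nil => simp at h
  | cons a t ih =>
    rw [budgetGreedy_cons] at h
    split_ifs at h
    · rcases Finset.mem_insert.1 h with rfl | h
      · exact List.mem_cons_self
      · exact List.mem_cons_of_mem _ (ih h)
    · exact List.mem_cons_of_mem _ (ih h)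

theorem budgetGreedy_eq_empty {b : ℝ} {l : List C} (h : ∀ c ∈ l, b < cost c) :
    budgetGreedy cost b l = ∅ := by
  induction l with
  | nil => rfl
  | cons a t ih =>
    rw [budgetGreedy_cons, if_neg (h a List.mem_cons_self).not_ge]
    exact ih fun c hc => h c (List.mem_cons_of_mem _ hc)

theorem inter_budgetGreedy (s : Finset C) (b : ℝ) {l : List C}
    (hl : l.Pairwise fun a c => c ∈ s → a ∈ s) :
    s ∩ budgetGreedy cost b l = budgetGreedy cost b (l.filter (· ∈ s)) := by
  induction l generalizing b with
  | nil => simp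
  | cons a t ih =>
    obtain ⟨ha, ht⟩ := List.pairwise_cons.1 hl
    by_cases has : a ∈ s
    · rw [List.filter_cons_of_pos (by simpa using has), budgetGreedy_cons, budgetGreedy_cons]
      split_ifs
      · rw [Finset.inter_insert_of_mem has, ih _ ht]
      · exact ih _ ht
    · have hts : t.filter (· ∈ s) = [] :=
        List.filter_eq_nil_iff.2 fun c hc hcs => has (ha c hc (by simpa using hcs))
      rw [List.filter_cons_of_neg (by simpa using has), hts, budgetGreedy_nil,
        Finset.eq_empty_iff_forall_notMem]
      intro c hc
      obtain ⟨hcs, hcl⟩ := Finset.mem_inter.1 hc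
      rcases List.mem_cons.1 (mem_of_mem_budgetGreedy cost hcl) with rfl | hct
      · exact has hcs
      · exact has (ha c hct hcs)

theorem mem_tail_iff_mem_erase {a : C} {t : List C} {R : Finset C} {p : C → Prop}
    (hnd : (a :: t).Nodup) (h : ∀ c, c ∈ a :: t ↔ c ∈ R ∧ p c) (c : C) :
    c ∈ t ↔ c ∈ R.erase a ∧ p c := by
  rw [Finset.mem_erase, and_assoc, ← h c, List.mem_cons]
  constructor
  · intro hct
    exact ⟨fun hca => (List.nodup_cons.1 hnd).1 (hca ▸ hct), Or.inr hct⟩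
  · rintro ⟨hca, hct | hct⟩
    exacts [absurd hct hca, hct]

end BudgetGreedy

section GreedyFold

variable {C : Type} [DecidableEq C] (budget : ℕ) (cost : C → ℕ)

theorem foldl_greedyStep {l : List C} {W : Finset C} (hl : l.Nodup) (hW : ∀ c ∈ l, c ∉ W) :
    l.foldl (fun W c => if (∑ x ∈ W, cost x) + cost c ≤ budget then insert c W else W) W =
      W ∪ budgetGreedy (fun c => (cost c : ℝ)) (budget - ∑ x ∈ W, (cost x : ℝ)) l := by
  induction l generalizing W with
  | nil => simp
  | cons a t ih =>
    obtain ⟨hat, ht⟩ := List.nodup_cons.1 hl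
    have haW : a ∉ W := hW a List.mem_cons_self
    have htW : ∀ c ∈ t, c ∉ W := fun c hc => hW c (List.mem_cons_of_mem _ hc)
    have hfit : (∑ x ∈ W, cost x) + cost a ≤ budget ↔
        (cost a : ℝ) ≤ budget - ∑ x ∈ W, (cost x : ℝ) := by
      rw [le_sub_iff_add_le', ← Nat.cast_sum, ← Nat.cast_add, Nat.cast_le]
    rw [List.foldl_cons, budgetGreedy_cons]
    by_cases h : (∑ x ∈ W, cost x) + cost a ≤ budget
    · have htaW : ∀ c ∈ t, c ∉ insert a W := fun c hc hcaW =>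
        (Finset.mem_insert.1 hcaW).elim (fun hca => hat (hca ▸ hc)) (htW c hc)
      rw [if_pos h, if_pos (hfit.1 h), ih ht htaW, Finset.sum_insert haW, sub_add_eq_sub_sub_swap,
        Finset.insert_union, Finset.union_insert]
    · rw [if_neg h, if_neg (mt hfit.2 h), ih ht htW]

theorem greedyFold_eq_budgetGreedy {l : List C} (hl : l.Nodup) :
    greedyFold budget cost l = budgetGreedy (fun c => (cost c : ℝ)) budget l := by
  simpa [greedyFold] using foldl_greedyStep budget cost hl (W := ∅) (by simp)

end GreedyFold

section Keys

variable {C V : Type} [Fintype C] [LinearOrder C] [Fintype V] [DecidableEq V] (E : PB C V)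

def costKey (c : C) : ℕ ×ₗ C := toLex (E.cost c, c)

theorem cost_le_of_costKey_le {a b : C} (h : E.costKey a ≤ E.costKey b) : E.cost a ≤ E.cost b :=
  Prod.Lex.monotone_fst _ _ h

theorem toLex_cost_le_of_costKey_le {a b : C} (h : E.costKey a ≤ E.costKey b) :
    toLex ((E.cost a : ℝ), a) ≤ toLex ((E.cost b : ℝ), b) := by
  simpa only [costKey, Prod.Lex.toLex_le_toLex, Nat.cast_lt, Nat.cast_inj] using h

def avKey (c : C) : ℕᵒᵈ ×ₗ (ℕ ×ₗ C) := toLex (OrderDual.toDual (E.score c), E.costKey c)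

theorem avKey_le_iff {a b : C} :
    E.avKey a ≤ E.avKey b ↔
      E.score b < E.score a ∨ E.score a = E.score b ∧ E.costKey a ≤ E.costKey b := by
  simp only [avKey, Prod.Lex.toLex_le_toLex, OrderDual.toDual_lt_toDual, OrderDual.toDual_inj]

theorem consOrderAV_cheaperFirst :
    E.consOrderAV (cheaperFirst E.cost fun c c' => decide (c < c')) =
      (Finset.univ : Finset C).toList.mergeSort fun a b => decide (E.avKey a ≤ E.avKey b) := by
  unfold consOrderAV
  congr 1
  funext a b
  rw [Bool.eq_iff_iff, decide_eq_true_iff, avKey_le_iff, costKey, costKey,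
    Prod.Lex.toLex_le_toLex, le_iff_lt_or_eq (a := a)]
  simp only [cheaperFirst, Bool.or_eq_true, Bool.and_eq_true, decide_eq_true_iff]
  tauto

theorem pairwise_consOrderAV_cheaperFirst :
    (E.consOrderAV (cheaperFirst E.cost fun c c' => decide (c < c'))).Pairwise
      fun a b => E.avKey a ≤ E.avKey b := by
  rw [consOrderAV_cheaperFirst]
  refine (List.pairwise_mergeSort (fun a b c hab hbc => ?_) (fun a b => ?_) _).imp
    fun h => of_decide_eq_true h
  · simpa using le_trans (of_decide_eq_true hab) (of_decide_eq_true hbc)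
  · simpa using le_total (E.avKey a) (E.avKey b)

theorem consOrderAV_perm (prec : C → C → Bool) :
    (E.consOrderAV prec).Perm (Finset.univ : Finset C).toList :=
  List.mergeSort_perm _ _

end Keys

section MES

variable {C V : Type} [Fintype C] [LinearOrder C] [Fintype V] [DecidableEq V] (E : PB C V)
  (u : V → C → ℝ) {fuel : ℕ} {R : Finset C} {bal : V → ℝ}

theorem mesRun_succ_of_forall_not_nonempty (h : ∀ c ∈ R, ¬(E.affordQ u bal c).Nonempty) :
    E.mesRun u (fuel + 1) R bal = ∅ := by
  classical
  rw [mesRun, dif_neg]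
  rintro ⟨c, hc⟩
  rw [Finset.mem_filter] at hc
  exact h c hc.1 hc.2

theorem mesRun_succ_of_le {a : C} (ha : a ∈ R) (haff : (E.affordQ u bal a).Nonempty)
    (hle : ∀ c ∈ R, (E.affordQ u bal c).Nonempty →
      toLex (E.qmin u bal a, a) ≤ toLex (E.qmin u bal c, c)) :
    E.mesRun u (fuel + 1) R bal =
      insert a (E.mesRun u fuel (R.erase a) fun w =>
        if a ∈ E.A w then bal w - min (bal w) (u w a * E.qmin u bal a) else bal w) := by
  classical
  have hne : (R.filter fun c => (E.affordQ u bal c).Nonempty).Nonempty :=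
    ⟨a, Finset.mem_filter.2 ⟨ha, haff⟩⟩
  rw [mesRun, dif_pos hne]
  have hbest : ((R.filter fun c => (E.affordQ u bal c).Nonempty).image
      fun c => toLex (E.qmin u bal c, c)).min' (hne.image _) = toLex (E.qmin u bal a, a) := by
    rw [Finset.min'_eq_iff]
    refine ⟨Finset.mem_image_of_mem _ (Finset.mem_filter.2 ⟨ha, haff⟩), ?_⟩
    simp only [Finset.mem_image, Finset.mem_filter]
    rintro _ ⟨c, ⟨hcR, hcaff⟩, rfl⟩
    exact hle c hcR hcaff
  simp only [hbest, ofLex_toLex]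

end MES

section SingleVoter

variable {C V : Type} [Fintype C] [LinearOrder C] [Fintype V] [DecidableEq V] (E : PB C V)

def aprUtility : V → C → ℝ := fun w c => if c ∈ E.A w then 1 else 0

variable [Subsingleton V] (v : V)

theorem score_eq_ite (c : C) : E.score c = if c ∈ E.A v then 1 else 0 := by
  rw [score, ← Finset.singleton_eq_univ v, Finset.filter_singleton]
  split_ifs <;> rfl

theorem mesPay_aprUtility (bal : V → ℝ) (c : C) (q : ℝ) :
    E.mesPay E.aprUtility bal c q = if c ∈ E.A v then min (bal v) q else 0 := by
  rw [mesPay, ← Finset.singleton_eq_univ v, Finset.filter_singleton]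
  split_ifs with hc <;> simp [aprUtility, hc]

theorem affordQ_aprUtility_nonempty_iff (hcost : ∀ c, 0 < E.cost c) (bal : V → ℝ) (c : C) :
    (E.affordQ E.aprUtility bal c).Nonempty ↔ c ∈ E.A v ∧ (E.cost c : ℝ) ≤ bal v := by
  simp only [affordQ, mesPay_aprUtility E v]
  constructor
  · rintro ⟨q, -, hq⟩
    split_ifs at hq with hc
    · exact ⟨hc, hq ▸ min_le_left _ _⟩
    · exact absurd hq.symm (Nat.cast_ne_zero.2 (hcost c).ne')
  · rintro ⟨hc, hle⟩
    exact ⟨E.cost c, Nat.cast_nonneg _, by rw [if_pos hc, min_eq_right hle]⟩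

theorem qmin_aprUtility {bal : V → ℝ} {c : C} (hc : c ∈ E.A v) (hle : (E.cost c : ℝ) ≤ bal v) :
    E.qmin E.aprUtility bal c = E.cost c := by
  refine IsLeast.csInf_eq ⟨⟨Nat.cast_nonneg _, ?_⟩, fun q ⟨_, hq⟩ => ?_⟩
  · rw [mesPay_aprUtility E v, if_pos hc, min_eq_right hle]
  · rw [mesPay_aprUtility E v, if_pos hc] at hq
    exact hq ▸ min_le_right _ _

theorem mesRun_aprUtility (hcost : ∀ c, 0 < E.cost c) :
    ∀ (fuel : ℕ) (R : Finset C) (bal : V → ℝ) (l : List C), R.card ≤ fuel →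
      l.Pairwise (fun a b => E.costKey a ≤ E.costKey b) → l.Nodup →
      (∀ c, c ∈ l ↔ c ∈ R ∧ c ∈ E.A v) →
      E.mesRun E.aprUtility fuel R bal = budgetGreedy (fun c => (E.cost c : ℝ)) (bal v) l
  | 0, R, bal, l, hR, _, _, hl => by
    obtain rfl : l = [] := List.eq_nil_iff_forall_not_mem.2 fun c hc =>
      by simpa [Finset.card_eq_zero.1 (Nat.le_zero.1 hR)] using (hl c).1 hc
    rfl
  | fuel + 1, R, bal, [], _, _, _, hl => by
    refine mesRun_succ_of_forall_not_nonempty E _ fun c hcR hc => ?_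
    rw [affordQ_aprUtility_nonempty_iff E v hcost] at hc
    exact List.not_mem_nil ((hl c).2 ⟨hcR, hc.1⟩)
  | fuel + 1, R, bal, a :: t, hR, hsort, hnd, hl => by
    obtain ⟨haR, haA⟩ := (hl a).1 List.mem_cons_self
    have hhead : ∀ c ∈ a :: t, E.costKey a ≤ E.costKey c := fun c hc =>
      (List.mem_cons.1 hc).elim (fun h => h ▸ le_rfl) (List.rel_of_pairwise_cons hsort)
    have hafford : ∀ c ∈ R, (E.affordQ E.aprUtility bal c).Nonempty ↔
        c ∈ a :: t ∧ (E.cost c : ℝ) ≤ bal v := fun c hcR => by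
      rw [affordQ_aprUtility_nonempty_iff E v hcost, hl c]
      exact ⟨fun h => ⟨⟨hcR, h.1⟩, h.2⟩, fun h => ⟨h.1.2, h.2⟩⟩
    by_cases hfit : (E.cost a : ℝ) ≤ bal v
    · rw [mesRun_succ_of_le E _ haR ((hafford a haR).2 ⟨List.mem_cons_self, hfit⟩) ?_,
        budgetGreedy_cons, if_pos hfit, qmin_aprUtility E v haA hfit]
      · rw [mesRun_aprUtility hcost fuel _ _ t ((Finset.card_erase_of_mem haR).trans_le
          (Nat.sub_le_of_le_add hR)) hsort.of_cons hnd.of_cons (mem_tail_iff_mem_erase hnd hl)]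
        simp [aprUtility, haA, min_eq_right hfit]
      · intro c hcR hc
        obtain ⟨hcl, hcfit⟩ := (hafford c hcR).1 hc
        rw [qmin_aprUtility E v haA hfit, qmin_aprUtility E v ((hl c).1 hcl).2 hcfit]
        exact toLex_cost_le_of_costKey_le E (hhead c hcl)
    · have hlt : ∀ c ∈ a :: t, bal v < E.cost c := fun c hc =>
        (not_le.1 hfit).trans_le (by exact_mod_cast cost_le_of_costKey_le E (hhead c hc))
      rw [mesRun_succ_of_forall_not_nonempty E _ fun c hcR hc => ?_,
        budgetGreedy_eq_empty _ hlt]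
      obtain ⟨hcl, hcfit⟩ := (hafford c hcR).1 hc
      exact (hlt c hcl).not_ge hcfit

theorem mesApr_eq_budgetGreedy (hcost : ∀ c, 0 < E.cost c) {l : List C}
    (hsort : l.Pairwise fun a b => E.costKey a ≤ E.costKey b) (hnd : l.Nodup)
    (hl : ∀ c, c ∈ l ↔ c ∈ E.A v) :
    E.mesApr = budgetGreedy (fun c => (E.cost c : ℝ)) E.budget l := by
  have hV : Fintype.card V = 1 := Fintype.card_eq_one_iff.2 ⟨v, fun w => Subsingleton.elim w v⟩
  rw [mesApr, mes, hV, Nat.cast_one, div_one]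
  exact mesRun_aprUtility E v hcost _ _ _ l Finset.card_univ.le hsort hnd
    fun c => by rw [hl, and_iff_right (Finset.mem_univ c)]

theorem inter_greedyAV_cheaperFirst :
    E.A v ∩ E.greedyAV (cheaperFirst E.cost fun c c' => decide (c < c')) =
      budgetGreedy (fun c => (E.cost c : ℝ)) E.budget
        ((E.consOrderAV (cheaperFirst E.cost fun c c' => decide (c < c'))).filter
          (· ∈ E.A v)) := by
  rw [greedyAV, greedyFold_eq_budgetGreedy _ _ ((consOrderAV_perm E _).nodup_iff.2
    (Finset.nodup_toList _))]
  refine inter_budgetGreedy _ _ _ ((pairwise_consOrderAV_cheaperFirst E).imp fun hab hb => ?_)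
  rw [avKey_le_iff, score_eq_ite E v, score_eq_ite E v, if_pos hb] at hab
  by_contra ha
  rw [if_neg ha] at hab
  omega

theorem pairwise_costKey_filter_consOrderAV_cheaperFirst :
    ((E.consOrderAV (cheaperFirst E.cost fun c c' => decide (c < c'))).filter
      (· ∈ E.A v)).Pairwise fun a b => E.costKey a ≤ E.costKey b := by
  refine ((pairwise_consOrderAV_cheaperFirst E).filter _).imp_of_mem fun ha hb hab => ?_
  rw [avKey_le_iff, score_eq_ite E v, score_eq_ite E v,
    if_pos (by simpa using (List.mem_filter.1 hb).2),
    if_pos (by simpa using (List.mem_filter.1 ha).2)] at hab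
  exact hab.resolve_left (lt_irrefl 1) |>.2

end SingleVoter

end PB

theorem stmt13 {C V : Type} [Fintype C] [LinearOrder C] [Fintype V] [DecidableEq V]
    (E : PB C V) (hcost : ∀ c, 0 < E.cost c)
    (v : V) (hv : ∀ w : V, w = v) :
    PB.mesApr E =
      E.A v ∩ PB.greedyAV E (PB.cheaperFirst E.cost fun c c' => decide (c < c')) := by
  have : Subsingleton V := ⟨fun a b => (hv a).trans (hv b).symm⟩
  have hperm := PB.consOrderAV_perm E (PB.cheaperFirst E.cost fun c c' => decide (c < c'))
  rw [PB.inter_greedyAV_cheaperFirst E v]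
  refine PB.mesApr_eq_budgetGreedy E v hcost
    (PB.pairwise_costKey_filter_consOrderAV_cheaperFirst E v)
    ((hperm.nodup_iff.2 (Finset.nodup_toList _)).filter _) fun c => ?_
  simp [List.mem_filter, hperm.mem_iff]
end
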